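/- arXiv:1109.4466 — 4 statements merged into one kernel-verified Lean document; each statement's English description precedes it below -/
import Mathlib

section
/- Let (V_x), (V'_x), (V''_x) be filtered directed systems over a field K with structure maps ψ, ψ', ψ'' respectively, together with linear maps f_x : V_x → V'_x, g_x : V'_x → V''_x, h_x : V''_x → V_x for each x ∈ [1,∞) which commute with the structure maps (i.e. f_{x₂} ∘ ψ_{x₁,x₂} = ψ'_{x₁,x₂} ∘ f_{x₁} for all x₁ ≤ x₂, and similarly for g and h) and which form an exact triangle at every x, i.e. ker f_x = im h_x, ker g_x = im f_x, and ker h_x = im g_x. If (V''_x) is isomorphic as a filtered directed system to the zero system (the filtered directed system all of whose vector spaces are 0), then (V_x) is isomorphic as a filtered directed system to (V'_x). -/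
open Module

theorem one_le_mul_real {C x : ℝ} (hC : 1 ≤ C) (hx : 1 ≤ x) : 1 ≤ C * x := by nlinarith

theorem le_mul_left_real {C x : ℝ} (hC : 1 ≤ C) (hx : 1 ≤ x) : x ≤ C * x := by nlinarith

theorem mul_le_mul_left_real {C x y : ℝ} (hC : 1 ≤ C) (hxy : x ≤ y) : C * x ≤ C * y := by
  nlinarith

/-- A filtered directed system of finite-dimensional `K`-vector spaces indexed by `[1,∞)`:
vector spaces `V x` for `x ∈ [1,∞)` together with structure maps `ψ_{x,y} : V x → V y` for
`x ≤ y` satisfying `ψ_{x,x} = id` and `ψ_{y,z} ∘ ψ_{x,y} = ψ_{x,z}`. -/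
structure FDS (K : Type) [Field K] where
  V : ∀ x : ℝ, 1 ≤ x → Type
  [addCommGroup : ∀ x hx, AddCommGroup (V x hx)]
  [module : ∀ x hx, Module K (V x hx)]
  [finiteDimensional : ∀ x hx, FiniteDimensional K (V x hx)]
  map : ∀ (x y : ℝ) (hx : 1 ≤ x) (hxy : x ≤ y), V x hx →ₗ[K] V y (hx.trans hxy)
  map_id : ∀ (x : ℝ) (hx : 1 ≤ x), map x x hx le_rfl = LinearMap.id
  map_comp : ∀ (x y z : ℝ) (hx : 1 ≤ x) (hxy : x ≤ y) (hyz : y ≤ z),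
    (map y z (hx.trans hxy) hyz).comp (map x y hx hxy) = map x z hx (hxy.trans hyz)

attribute [instance] FDS.addCommGroup FDS.module FDS.finiteDimensional

/-- A morphism of filtered directed systems, with constant `C ≥ 1`: linear maps
`a_x : V x → V' (C*x)` commuting with the structure maps. -/
structure FDSHom (K : Type) [Field K] (S T : FDS K) where
  C : ℝ
  one_le : 1 ≤ C
  a : ∀ (x : ℝ) (hx : 1 ≤ x), S.V x hx →ₗ[K] T.V (C * x) (one_le_mul_real one_le hx)
  comm : ∀ (x y : ℝ) (hx : 1 ≤ x) (hxy : x ≤ y),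
    (a y (hx.trans hxy)).comp (S.map x y hx hxy) =
      (T.map (C * x) (C * y) (one_le_mul_real one_le hx)
          (mul_le_mul_left_real one_le hxy)).comp (a x hx)

/-- Two filtered directed systems are isomorphic if there are morphisms in both directions
whose composites are the corresponding structure maps. -/
def FDS.Isomorphic (K : Type) [Field K] (S T : FDS K) : Prop :=
  ∃ (φ : FDSHom K S T) (φ' : FDSHom K T S),
    (∀ (x : ℝ) (hx : 1 ≤ x),
      (φ'.a (φ.C * x) (one_le_mul_real φ.one_le hx)).comp (φ.a x hx) =
        S.map x (φ'.C * (φ.C * x)) hx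
          ((le_mul_left_real φ.one_le hx).trans
            (le_mul_left_real φ'.one_le (one_le_mul_real φ.one_le hx)))) ∧
    (∀ (x : ℝ) (hx : 1 ≤ x),
      (φ.a (φ'.C * x) (one_le_mul_real φ'.one_le hx)).comp (φ'.a x hx) =
        T.map x (φ.C * (φ'.C * x)) hx
          ((le_mul_left_real φ'.one_le hx).trans
            (le_mul_left_real φ.one_le (one_le_mul_real φ'.one_le hx))))

/-- The zero filtered directed system: all of its vector spaces are `0`. -/
def FDS.zero (K : Type) [Field K] : FDS K where
  V _ _ := PUnit
  map _ _ _ _ := 0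
  map_id _ _ := LinearMap.ext fun _ => Subsingleton.elim _ _
  map_comp _ _ _ _ _ _ := LinearMap.ext fun _ => Subsingleton.elim _ _

set_option maxHeartbeats 1000000 in
/-- If `(V_x) → (V'_x) → (V''_x) → (V_x)` is a long exact sequence of filtered directed
systems (given by maps `f`, `g`, `h` commuting with the structure maps and exact at every
`x`) and `(V''_x)` is isomorphic to the zero filtered directed system, then `(V_x)` is
isomorphic to `(V'_x)`. -/
theorem isomorphic_of_les_with_zero (K : Type) [Field K] (S S' S'' : FDS K)
    (f : ∀ (x : ℝ) (hx : 1 ≤ x), S.V x hx →ₗ[K] S'.V x hx)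
    (g : ∀ (x : ℝ) (hx : 1 ≤ x), S'.V x hx →ₗ[K] S''.V x hx)
    (h : ∀ (x : ℝ) (hx : 1 ≤ x), S''.V x hx →ₗ[K] S.V x hx)
    (hf : ∀ (x y : ℝ) (hx : 1 ≤ x) (hxy : x ≤ y),
      (f y (hx.trans hxy)).comp (S.map x y hx hxy) = (S'.map x y hx hxy).comp (f x hx))
    (hg : ∀ (x y : ℝ) (hx : 1 ≤ x) (hxy : x ≤ y),
      (g y (hx.trans hxy)).comp (S'.map x y hx hxy) = (S''.map x y hx hxy).comp (g x hx))
    (hh : ∀ (x y : ℝ) (hx : 1 ≤ x) (hxy : x ≤ y),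
      (h y (hx.trans hxy)).comp (S''.map x y hx hxy) = (S.map x y hx hxy).comp (h x hx))
    (hexact_f : ∀ (x : ℝ) (hx : 1 ≤ x), LinearMap.ker (f x hx) = LinearMap.range (h x hx))
    (hexact_g : ∀ (x : ℝ) (hx : 1 ≤ x), LinearMap.ker (g x hx) = LinearMap.range (f x hx))
    (hexact_h : ∀ (x : ℝ) (hx : 1 ≤ x), LinearMap.ker (h x hx) = LinearMap.range (g x hx))
    (hzero : FDS.Isomorphic K S'' (FDS.zero K)) :
    FDS.Isomorphic K S S' := by
  obtain ⟨φ, φ', hc1, hc2⟩ := hzero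
  have hD : (1:ℝ) ≤ φ'.C * φ.C := one_le_mul_real φ'.one_le φ.one_le
  set D : ℝ := φ'.C * φ.C with hDdef
  clear_value D
  -- The structure maps of S'' vanish past factor D.
  have hvan : ∀ (x z : ℝ) (hx : 1 ≤ x) (hxz : x ≤ z), D * x ≤ z →
      S''.map x z hx hxz = 0 := by
    intro x z hx hxz hDz
    have hle1 : x ≤ φ'.C * (φ.C * x) :=
      (le_mul_left_real φ.one_le hx).trans
        (le_mul_left_real φ'.one_le (one_le_mul_real φ.one_le hx))
    have hle2 : φ'.C * (φ.C * x) ≤ z := by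
      have : D * x = φ'.C * (φ.C * x) := by rw [hDdef]; ring
      linarith [this ▸ hDz]
    have h0 : S''.map x (φ'.C * (φ.C * x)) hx hle1 = 0 := by
      rw [← hc1 x hx]
      ext v
      have hz : φ.a x hx v = 0 := Subsingleton.elim (α := PUnit) _ _
      simp [hz]
    ext v
    have := LinearMap.congr_fun (S''.map_comp x (φ'.C * (φ.C * x)) z hx hle1 hle2) v
    simp only [LinearMap.comp_apply] at this
    rw [← this, h0]
    simp
  -- pointwise composition of structure maps
  have mm : ∀ (T : FDS K) (x y z : ℝ) (hx : 1 ≤ x) (hxy : x ≤ y) (hyz : y ≤ z)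
      (v : T.V x hx), T.map y z (hx.trans hxy) hyz (T.map x y hx hxy v) =
        T.map x z hx (hxy.trans hyz) v :=
    fun T x y z hx hxy hyz v => LinearMap.congr_fun (T.map_comp x y z hx hxy hyz) v
  -- well-definedness: past factor D, images under S.map depend only on f-images
  have wd : ∀ (y z : ℝ) (hy : 1 ≤ y) (hyz : y ≤ z), D * y ≤ z →
      ∀ u u' : S.V y hy, f y hy u = f y hy u' →
      S.map y z hy hyz u = S.map y z hy hyz u' := by
    intro y z hy hyz hDz u u' huu
    have hk : u - u' ∈ LinearMap.ker (f y hy) := by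
      simp [LinearMap.mem_ker, map_sub, huu]
    rw [hexact_f] at hk
    obtain ⟨w, hw⟩ := hk
    have h2 := LinearMap.congr_fun (hh y z hy hyz) w
    simp only [LinearMap.comp_apply] at h2
    have h3 : S.map y z hy hyz (u - u') = 0 := by
      rw [← hw, ← h2, hvan y z hy hyz hDz]
      simp
    rw [map_sub, sub_eq_zero] at h3
    exact h3
  -- choose sections of f onto its range
  have hsec : ∀ (y : ℝ) (hy : 1 ≤ y),
      ∃ s : ↥(LinearMap.range (f y hy)) →ₗ[K] S.V y hy,
        ∀ w, f y hy (s w) = (w : S'.V y hy) := by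
    intro y hy
    obtain ⟨s, hs⟩ := (f y hy).rangeRestrict.exists_rightInverse_of_surjective
      (f y hy).range_rangeRestrict
    refine ⟨s, fun w => ?_⟩
    have := LinearMap.congr_fun hs w
    simpa using congrArg Subtype.val this
  choose s hs using hsec
  -- membership in range of f
  have memb : ∀ (x : ℝ) (hx : 1 ≤ x) (v' : S'.V x hx),
      S'.map x (D * x) hx (le_mul_left_real hD hx) v' ∈
        LinearMap.range (f (D * x) (one_le_mul_real hD hx)) := by
    intro x hx v'
    rw [← hexact_g]
    have h1 := LinearMap.congr_fun (hg x (D * x) hx (le_mul_left_real hD hx)) v'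
    simp only [LinearMap.comp_apply] at h1
    simp only [LinearMap.mem_ker, h1, hvan x (D * x) hx (le_mul_left_real hD hx) le_rfl]
    simp
  have hE : (1:ℝ) ≤ D * D := one_le_mul_real hD hD
  have aux1 : ∀ t : ℝ, 1 ≤ t → D * t ≤ D * D * t := fun t ht => by
    nlinarith [mul_nonneg (mul_nonneg (by linarith : (0:ℝ) ≤ D)
      (by linarith : (0:ℝ) ≤ t)) (by linarith : (0:ℝ) ≤ D - 1)]
  have aux2 : ∀ t : ℝ, 1 ≤ t → D * t ≤ D * (D * D * t) := fun t ht => by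
    nlinarith [mul_nonneg (mul_nonneg (by linarith : (0:ℝ) ≤ D)
      (by linarith : (0:ℝ) ≤ t)) (by nlinarith : (0:ℝ) ≤ D * D - 1)]
  refine ⟨⟨D, hD, fun x hx => (f (D * x) (one_le_mul_real hD hx)).comp
      (S.map x (D * x) hx (le_mul_left_real hD hx)), ?_⟩,
    ⟨D * D, hE, fun x hx =>
      (S.map (D * x) ((D * D) * x) (one_le_mul_real hD hx) (aux1 x hx)).comp
        ((s (D * x) (one_le_mul_real hD hx)).comp
          (LinearMap.codRestrict _ (S'.map x (D * x) hx (le_mul_left_real hD hx))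
            (memb x hx))), ?_⟩, ?_, ?_⟩
  · -- comm for a
    intro x y hx hxy
    ext v
    simp only [LinearMap.comp_apply]
    have h1 := LinearMap.congr_fun
      (hf (D * x) (D * y) (one_le_mul_real hD hx) (mul_le_mul_left_real hD hxy))
      (S.map x (D * x) hx (le_mul_left_real hD hx) v)
    simp only [LinearMap.comp_apply] at h1
    rw [mm S, ← h1, mm S]
  · -- comm for b
    intro x y hx hxy
    ext v'
    simp only [LinearMap.comp_apply]
    rw [mm S, ← mm S (D * x) (D * y) (D * D * y)]
    apply wd (D * y) (D * D * y) _ _ (le_of_eq (by ring))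
    have h1 := LinearMap.congr_fun
      (hf (D * x) (D * y) (one_le_mul_real hD hx) (mul_le_mul_left_real hD hxy))
      ((s (D * x) (one_le_mul_real hD hx))
        ((LinearMap.codRestrict _ (S'.map x (D * x) hx (le_mul_left_real hD hx))
          (memb x hx)) v'))
    simp only [LinearMap.comp_apply] at h1
    rw [hs, h1, hs]
    simp only [LinearMap.codRestrict_apply, mm S']
    case hxy => exact mul_le_mul_left_real hD hxy
    case hyz => exact aux1 y (hx.trans hxy)
  · -- composite b ∘ a = structure map of S
    intro x hx
    ext v
    simp only [LinearMap.comp_apply]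
    rw [← mm S x (D * (D * x)) (D * D * (D * x))]
    apply wd (D * (D * x)) (D * D * (D * x)) _ _ (le_of_eq (by ring))
    rw [hs]
    simp only [LinearMap.codRestrict_apply]
    have h1 := LinearMap.congr_fun
      (hf (D * x) (D * (D * x)) (one_le_mul_real hD hx)
        (le_mul_left_real hD (one_le_mul_real hD hx)))
      (S.map x (D * x) hx (le_mul_left_real hD hx) v)
    simp only [LinearMap.comp_apply] at h1
    rw [← h1, mm S]
    case hyz => exact aux1 (D * x) (one_le_mul_real hD hx)
  · -- composite a ∘ b = structure map of S'
    intro x hx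
    ext v'
    simp only [LinearMap.comp_apply]
    rw [mm S]
    have h1 := LinearMap.congr_fun
      (hf (D * x) (D * (D * D * x)) (one_le_mul_real hD hx) (aux2 x hx))
      ((s (D * x) (one_le_mul_real hD hx))
        ((LinearMap.codRestrict _ (S'.map x (D * x) hx (le_mul_left_real hD hx))
          (memb x hx)) v'))
    simp only [LinearMap.comp_apply] at h1
    rw [h1, hs]
    simp only [LinearMap.codRestrict_apply, mm S']
end

section
/- If (V_x) and (V'_x) are filtered directed systems over a field K such that (V_x) is bigger than (V'_x), then Γ((V_x)) ≥ Γ((V'_x)), where Γ denotes the growth rate. -/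
open Module

theorem bigger_aux {B C x y : ℝ} (hB : 1 ≤ B) (hC : 1 ≤ C) (hBC : B ≤ C) (hx : 1 ≤ x)
    (hy : 1 ≤ y) : B * x ≤ C * y * x :=
  mul_le_mul_of_nonneg_right (by nlinarith) (by linarith)

/-- `S` is bigger than `T` : there are constants `A, B, C ≥ 1` with `B ≤ C` so that for
all `x, y ≥ 1` the rank of the image of `ψ_{Bx,Cyx}` (in `S`) is at least the rank of the
image of `ψ'_{x,Ayx}` (in `T`). -/
def FDS.Bigger (K : Type) [Field K] (S T : FDS K) : Prop :=
  ∃ (A B C : ℝ) (hA : 1 ≤ A) (hB : 1 ≤ B) (hC : 1 ≤ C) (hBC : B ≤ C),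
    ∀ (x y : ℝ) (hx : 1 ≤ x) (hy : 1 ≤ y),
      Module.finrank K (LinearMap.range (T.map x (A * y * x) hx
          (le_mul_left_real (one_le_mul_real hA hy) hx)))
        ≤ Module.finrank K (LinearMap.range (S.map (B * x) (C * y * x)
          (one_le_mul_real hB hx) (bigger_aux hB hC hBC hx hy)))

/-- The rank of the image of `V x` in the direct limit `colim_y V_y` of the system. -/
noncomputable def FDS.colimRank (K : Type) [Field K] (S : FDS K) (x : ℝ) (hx : 1 ≤ x) : ℕ :=
  Module.finrank K (LinearMap.range
    (Module.DirectLimit.of K {y : ℝ // 1 ≤ y} (fun i => S.V i.1 i.2)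
      (fun i j hij => S.map i.1 j.1 i.2 hij) ⟨x, hx⟩))

/-- The growth rate `Γ((V_x)) = limsup_{x → ∞} log a(x) / log x ∈ {-∞} ∪ [0,∞]`, where
`a(x)` is the rank of the image of the canonical map `V_x → colim_y V_y`, with the
convention `log 0 = -∞`. -/
noncomputable def FDS.growthRate (K : Type) [Field K] (S : FDS K) : EReal :=
  Filter.limsup (fun x : ℝ =>
    if hx : 1 ≤ x then
      if FDS.colimRank K S x hx = 0 then (⊥ : EReal)
      else (((Real.log (FDS.colimRank K S x hx)) / Real.log x : ℝ) : EReal)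
    else (⊥ : EReal)) Filter.atTop


namespace MyAux

variable {K : Type} [Field K]

instance FDS_directedSystem (S : FDS K) :
    DirectedSystem (fun i : {y : ℝ // 1 ≤ y} => S.V i.1 i.2)
      (fun i j hij => S.map i.1 j.1 i.2 hij) where
  map_self i x := DFunLike.congr_fun (S.map_id i.1 i.2) x
  map_map {k j i} hij hjk x := DFunLike.congr_fun (S.map_comp i.1 j.1 k.1 i.2 hij hjk) x

/-- ranks of images are antitone in the target. -/
theorem rank_comp_le (S : FDS K) (x y z : ℝ) (hx : 1 ≤ x) (hxy : x ≤ y) (hyz : y ≤ z) :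
    finrank K (LinearMap.range (S.map x z hx (hxy.trans hyz))) ≤
      finrank K (LinearMap.range (S.map x y hx hxy)) := by
  rw [← S.map_comp x y z hx hxy hyz, LinearMap.range_comp]
  exact Submodule.finrank_map_le _ _

theorem ker_le_ker (S : FDS K) (x y z : ℝ) (hx : 1 ≤ x) (hxy : x ≤ y) (hyz : y ≤ z) :
    LinearMap.ker (S.map x y hx hxy) ≤ LinearMap.ker (S.map x z hx (hxy.trans hyz)) := by
  intro u hu
  rw [LinearMap.mem_ker] at hu ⊢
  rw [← S.map_comp x y z hx hxy hyz]
  simp [hu]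

theorem of_eq_comp (S : FDS K) (x z : ℝ) (hx : 1 ≤ x) (hxz : x ≤ z) :
    (Module.DirectLimit.of K {y : ℝ // 1 ≤ y} (fun i => S.V i.1 i.2)
        (fun i j hij => S.map i.1 j.1 i.2 hij) ⟨x, hx⟩) =
      (Module.DirectLimit.of K {y : ℝ // 1 ≤ y} (fun i => S.V i.1 i.2)
        (fun i j hij => S.map i.1 j.1 i.2 hij) ⟨z, hx.trans hxz⟩).comp
        (S.map x z hx hxz) :=
  LinearMap.ext fun u =>
    (Module.DirectLimit.of_f (R := K) (ι := {y : ℝ // 1 ≤ y}) (G := fun i => S.V i.1 i.2)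
      (f := fun i j hij => S.map i.1 j.1 i.2 hij) (i := ⟨x, hx⟩) (j := ⟨z, hx.trans hxz⟩)
      (hij := hxz) (x := u)).symm

/-- `a(x) ≤ rank ψ_{x,z}` for every `z ≥ x`. -/
theorem colimRank_le (S : FDS K) (x z : ℝ) (hx : 1 ≤ x) (hxz : x ≤ z) :
    FDS.colimRank K S x hx ≤ finrank K (LinearMap.range (S.map x z hx hxz)) := by
  rw [FDS.colimRank, of_eq_comp S x z hx hxz, LinearMap.range_comp]
  exact Submodule.finrank_map_le _ _

/-- There is a stabilization point `z ≥ x` past which all ranks are `≤ a(x)`. -/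
theorem exists_rank_le_colimRank (S : FDS K) (x : ℝ) (hx : 1 ≤ x) :
    ∃ (z : ℝ) (hxz : x ≤ z), ∀ (w : ℝ) (hzw : z ≤ w),
      finrank K (LinearMap.range (S.map x w hx (hxz.trans hzw))) ≤ FDS.colimRank K S x hx := by
  classical
  set Φ := Module.DirectLimit.of K {y : ℝ // 1 ≤ y} (fun i => S.V i.1 i.2)
      (fun i j hij => S.map i.1 j.1 i.2 hij) ⟨x, hx⟩ with hΦ
  set Aset : Set ℕ :=
    {n | ∃ (z : ℝ) (hxz : x ≤ z), n = finrank K (LinearMap.range (S.map x z hx hxz))} with hAset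
  have hne : Aset.Nonempty := ⟨_, x, le_rfl, rfl⟩
  obtain ⟨z, hxz, hzval⟩ := Nat.sInf_mem hne
  refine ⟨z, hxz, fun w hzw => ?_⟩
  -- the rank at every `w ≥ z` equals `sInf Aset`
  have hstab : ∀ (w : ℝ) (hzw : z ≤ w),
      finrank K (LinearMap.range (S.map x w hx (hxz.trans hzw))) =
        finrank K (LinearMap.range (S.map x z hx hxz)) := by
    intro w hzw
    refine le_antisymm (rank_comp_le S x z w hx hxz hzw) ?_
    rw [← hzval]
    exact Nat.sInf_le ⟨w, hxz.trans hzw, rfl⟩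
  -- kernels stabilize as well
  have hker : ∀ (w : ℝ) (hzw : z ≤ w),
      LinearMap.ker (S.map x w hx (hxz.trans hzw)) = LinearMap.ker (S.map x z hx hxz) := by
    intro w hzw
    refine (Submodule.eq_of_le_of_finrank_le (ker_le_ker S x z w hx hxz hzw) ?_).symm
    have h1 := LinearMap.finrank_range_add_finrank_ker (S.map x w hx (hxz.trans hzw))
    have h2 := LinearMap.finrank_range_add_finrank_ker (S.map x z hx hxz)
    have h3 := hstab w hzw
    omega
  -- kernel of the canonical map into the colimit is contained in `ker ψ_{x,z}`
  have hkerof : LinearMap.ker Φ ≤ LinearMap.ker (S.map x z hx hxz) := by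
    intro u hu
    rw [LinearMap.mem_ker] at hu
    obtain ⟨j, hij, hj0⟩ := Module.DirectLimit.of.zero_exact hu
    have hxj : x ≤ j.1 := hij
    set w : ℝ := max j.1 z with hw
    have hzw : z ≤ w := le_max_right _ _
    have hjw : j.1 ≤ w := le_max_left _ _
    have hxw : x ≤ w := hxz.trans hzw
    have huw : S.map x w hx hxw u = 0 := by
      have := DFunLike.congr_fun (S.map_comp x j.1 w hx hxj hjw) u
      rw [← this]
      simp only [LinearMap.comp_apply]
      rw [hj0, map_zero]
    rw [← hker w hzw]
    exact huw
  -- rank-nullity comparison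
  have h1 : finrank K (LinearMap.range Φ) + finrank K (LinearMap.ker Φ) =
      finrank K (S.V x hx) := LinearMap.finrank_range_add_finrank_ker Φ
  have h2 : finrank K (LinearMap.range (S.map x z hx hxz)) +
      finrank K (LinearMap.ker (S.map x z hx hxz)) = finrank K (S.V x hx) :=
    LinearMap.finrank_range_add_finrank_ker (S.map x z hx hxz)
  have h4 : finrank K (LinearMap.ker Φ) ≤ finrank K (LinearMap.ker (S.map x z hx hxz)) :=
    Submodule.finrank_mono hkerof
  have h5 := hstab w hzw
  rw [FDS.colimRank, ← hΦ]
  omega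

end MyAux

namespace MyAux2
open MyAux

variable {K : Type} [Field K]

theorem colimRank_le_colimRank (S T : FDS K) {A B C : ℝ} (hA : 1 ≤ A) (hB : 1 ≤ B)
    (hC : 1 ≤ C) (hBC : B ≤ C)
    (hbig : ∀ (x y : ℝ) (hx : 1 ≤ x) (hy : 1 ≤ y),
      Module.finrank K (LinearMap.range (T.map x (A * y * x) hx
          (le_mul_left_real (one_le_mul_real hA hy) hx)))
        ≤ Module.finrank K (LinearMap.range (S.map (B * x) (C * y * x)
          (one_le_mul_real hB hx) (bigger_aux hB hC hBC hx hy))))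
    (x : ℝ) (hx : 1 ≤ x) :
    FDS.colimRank K T x hx ≤ FDS.colimRank K S (B * x) (one_le_mul_real hB hx) := by
  obtain ⟨z, hxz, hstab⟩ := exists_rank_le_colimRank S (B * x) (one_le_mul_real hB hx)
  set y : ℝ := max 1 (z / (C * x)) with hy
  have hy1 : 1 ≤ y := le_max_left _ _
  have hCx : 0 < C * x := by nlinarith
  have hzC : z ≤ C * y * x := by
    have h1 : z / (C * x) ≤ y := le_max_right _ _
    rw [div_le_iff₀ hCx] at h1
    nlinarith
  calc FDS.colimRank K T x hx
      ≤ finrank K (LinearMap.range (T.map x (A * y * x) hx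
          (le_mul_left_real (one_le_mul_real hA hy1) hx))) :=
        colimRank_le T x (A * y * x) hx (le_mul_left_real (one_le_mul_real hA hy1) hx)
    _ ≤ finrank K (LinearMap.range (S.map (B * x) (C * y * x)
          (one_le_mul_real hB hx) (bigger_aux hB hC hBC hx hy1))) := hbig x y hx hy1
    _ ≤ FDS.colimRank K S (B * x) (one_le_mul_real hB hx) := hstab (C * y * x) hzC

end MyAux2

/-- If `(V_x)` is bigger than `(V'_x)` then `Γ((V_x)) ≥ Γ((V'_x))`. -/
theorem growthRate_le_growthRate_of_bigger (K : Type) [Field K] (S T : FDS K)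
    (hbig : FDS.Bigger K S T) :
    FDS.growthRate K T ≤ FDS.growthRate K S := by
  obtain ⟨A, B, C, hA, hB, hC, hBC, hb⟩ := hbig
  have key : ∀ (x : ℝ) (hx : 1 ≤ x),
      FDS.colimRank K T x hx ≤ FDS.colimRank K S (B * x) (one_le_mul_real hB hx) :=
    MyAux2.colimRank_le_colimRank S T hA hB hC hBC hb
  refine le_of_forall_gt_imp_ge_of_dense fun c hc => ?_
  obtain ⟨d, hSd, hdc⟩ := EReal.exists_between_coe_real hc
  obtain ⟨e, hde', hec⟩ := EReal.exists_between_coe_real hdc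
  rw [EReal.coe_lt_coe_iff] at hde'
  refine le_trans ?_ hec.le
  rw [FDS.growthRate] at hSd ⊢
  have hev := Filter.eventually_lt_of_limsup_lt hSd
  obtain ⟨M, hM⟩ := Filter.eventually_atTop.1 hev
  refine Filter.limsup_le_of_le Filter.isCobounded_le_of_bot ?_
  rw [Filter.eventually_atTop]
  refine ⟨max (max M 2) (Real.exp ((|d| * Real.log B) / (e - d))), fun x hx => ?_⟩
  have hx2 : (2:ℝ) ≤ x := le_trans (le_trans (le_max_right M 2) (le_max_left _ _)) hx
  have hxM : M ≤ x := le_trans (le_trans (le_max_left M 2) (le_max_left _ _)) hx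
  have hx1 : (1:ℝ) ≤ x := by linarith
  have hxe : Real.exp ((|d| * Real.log B) / (e - d)) ≤ x := le_trans (le_max_right _ _) hx
  have hlogx : 0 < Real.log x := Real.log_pos (by linarith)
  have hBx1 : (1:ℝ) ≤ B * x := one_le_mul_real hB hx1
  have hMBx : M ≤ B * x := le_trans hxM (le_mul_left_real hB hx1)
  have hfS := hM (B * x) hMBx
  rw [dif_pos hBx1] at hfS
  rw [dif_pos hx1]
  set a' := FDS.colimRank K T x hx1 with ha'
  set a := FDS.colimRank K S (B * x) hBx1 with ha
  have hkey : a' ≤ a := key x hx1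
  by_cases haz : a = 0
  · have h0 : a' = 0 := by omega
    rw [if_pos h0]; exact bot_le
  · rw [if_neg haz] at hfS
    by_cases ha'z : a' = 0
    · rw [if_pos ha'z]; exact bot_le
    · rw [if_neg ha'z]
      rw [EReal.coe_lt_coe_iff] at hfS
      have hlogBx : 0 < Real.log (B * x) := Real.log_pos (by nlinarith)
      have hloga : 0 ≤ Real.log a :=
        Real.log_nonneg (by exact_mod_cast Nat.one_le_iff_ne_zero.2 haz)
      rw [div_lt_iff₀ hlogBx] at hfS
      have hd0 : 0 < d := by
        by_contra h
        push_neg at h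
        have := mul_nonpos_of_nonpos_of_nonneg h hlogBx.le
        linarith
      have hlogB : 0 ≤ Real.log B := Real.log_nonneg hB
      have hloga' : Real.log a' ≤ Real.log a :=
        Real.log_le_log (by exact_mod_cast Nat.pos_of_ne_zero ha'z) (by exact_mod_cast hkey)
      have hsplit : Real.log (B * x) = Real.log B + Real.log x :=
        Real.log_mul (by linarith) (by linarith)
      rw [hsplit] at hfS
      have hlxe : (|d| * Real.log B) / (e - d) ≤ Real.log x := by
        have h := Real.log_le_log (Real.exp_pos _) hxe
        rwa [Real.log_exp] at h
      rw [div_le_iff₀ (by linarith : (0:ℝ) < e - d)] at hlxe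
      have habs : d * Real.log B ≤ |d| * Real.log B :=
        mul_le_mul_of_nonneg_right (le_abs_self d) hlogB
      have hfinal : Real.log a' ≤ e * Real.log x := by nlinarith
      rw [EReal.coe_le_coe_iff, div_le_iff₀ hlogx]
      exact hfinal
end

section
/- Suppose (V_x) and (V'_x) are filtered directed systems over a field K such that (V_x) is bigger than (V'_x). Then (V'_x) is isomorphic as a filtered directed system to a filtered directed system (W_x) such that dim_K W_x ≤ dim_K V_x for all x ∈ [1,∞). -/
open Module

section Aux

variable {K : Type} [Field K] (T : FDS K) (A B : ℝ) (hA : 1 ≤ A) (hB : 1 ≤ B)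

theorem aux_one_le_div {x : ℝ} (hB : 1 ≤ B) (h : B ≤ x) : 1 ≤ x / B :=
  (one_le_div (by linarith)).mpr h

theorem aux_div_le {x : ℝ} (hA : 1 ≤ A) (hB : 1 ≤ B) (hx : 1 ≤ x) : x / B ≤ A * x := by
  have h1 : x / B ≤ x := div_le_self (by linarith) hB
  nlinarith

/-- The submodule of `T.V (A*x)` defining `W_x`. -/
noncomputable def Psub (x : ℝ) (hx : 1 ≤ x) : Submodule K (T.V (A * x) (one_le_mul_real hA hx)) :=
  if h : B ≤ x then
    LinearMap.range (T.map (x / B) (A * x) (aux_one_le_div B hB h) (aux_div_le A B hA hB hx))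
  else ⊥

theorem Psub_eq_pos {x : ℝ} (hx : 1 ≤ x) (h : B ≤ x) :
    Psub T A B hA hB x hx =
      LinearMap.range (T.map (x / B) (A * x) (aux_one_le_div B hB h)
        (aux_div_le A B hA hB hx)) := dif_pos h

theorem Psub_eq_neg {x : ℝ} (hx : 1 ≤ x) (h : ¬ B ≤ x) :
    Psub T A B hA hB x hx = ⊥ := dif_neg h

theorem Psub_mono {x y : ℝ} (hx : 1 ≤ x) (hxy : x ≤ y) :
    ∀ v ∈ Psub T A B hA hB x hx,
      T.map (A * x) (A * y) (one_le_mul_real hA hx) (mul_le_mul_left_real hA hxy) v ∈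
        Psub T A B hA hB y (hx.trans hxy) := by
  intro v hv
  by_cases h : B ≤ x
  · have hy : B ≤ y := h.trans hxy
    rw [Psub, dif_pos h] at hv
    rw [Psub, dif_pos hy]
    obtain ⟨u, hu⟩ := hv
    have hdiv : x / B ≤ y / B := by
      apply div_le_div_of_nonneg_right hxy <;> linarith
    refine ⟨T.map (x / B) (y / B) (aux_one_le_div B hB h) hdiv u, ?_⟩
    rw [← hu]
    calc T.map (y / B) (A * y) _ _ (T.map (x / B) (y / B) _ _ u)
        = T.map (x / B) (A * y) (aux_one_le_div B hB h)
            (hdiv.trans (aux_div_le A B hA hB (hx.trans hxy))) u := by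
          exact LinearMap.congr_fun (T.map_comp _ _ _ _ _ _) u
      _ = T.map (A * x) (A * y) _ _ (T.map (x / B) (A * x) _ _ u) := by
          exact (LinearMap.congr_fun (T.map_comp _ _ _ _ _ _) u).symm
  · rw [Psub, dif_neg h] at hv
    simp only [Submodule.mem_bot] at hv
    subst hv
    simp only [map_zero]
    exact Submodule.zero_mem _

/-- The filtered directed system `W`. -/
noncomputable def Wfds : FDS K where
  V x hx := ↥(Psub T A B hA hB x hx)
  addCommGroup _ _ := inferInstance
  module _ _ := inferInstance
  finiteDimensional _ _ := inferInstance
  map x y hx hxy :=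
    (T.map (A * x) (A * y) (one_le_mul_real hA hx) (mul_le_mul_left_real hA hxy)).restrict
      (Psub_mono T A B hA hB hx hxy)
  map_id x hx := by
    ext v
    simp only [LinearMap.restrict_apply, LinearMap.id_coe, id_eq]
    exact LinearMap.congr_fun (T.map_id (A * x) (one_le_mul_real hA hx)) v.val
  map_comp x y z hx hxy hyz := by
    ext v
    simp only [LinearMap.comp_apply, LinearMap.restrict_apply]
    exact LinearMap.congr_fun (T.map_comp (A * x) (A * y) (A * z) _ _ _) v.val

theorem mem_Psub_of_map {x : ℝ} (hx : 1 ≤ x) (t : T.V x hx) :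
    T.map x (A * (B * x)) hx
        ((le_mul_left_real hB hx).trans (le_mul_left_real hA (one_le_mul_real hB hx))) t ∈
      Psub T A B hA hB (B * x) (one_le_mul_real hB hx) := by
  have hBx : B ≤ B * x := by nlinarith
  rw [Psub, dif_pos hBx]
  have hBx' : B * x / B = x := by
    rw [mul_comm, mul_div_assoc, div_self (by linarith : B ≠ 0), mul_one]
  have hxd : x ≤ B * x / B := le_of_eq hBx'.symm
  refine ⟨T.map x (B * x / B) hx hxd t, ?_⟩
  exact LinearMap.congr_fun (T.map_comp x (B * x / B) (A * (B * x)) hx hxd _) t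

theorem finrank_V_congr {K : Type} [Field K] (S : FDS K) {x y : ℝ} (h : x = y)
    (hx : 1 ≤ x) (hy : 1 ≤ y) :
    Module.finrank K (S.V x hx) = Module.finrank K (S.V y hy) := by subst h; rfl

theorem finrank_range_congr {K : Type} [Field K] (T : FDS K) {x y y' : ℝ} (hx : 1 ≤ x)
    (h1 : x ≤ y) (h1' : x ≤ y') (h : y = y') :
    Module.finrank K (LinearMap.range (T.map x y hx h1)) =
      Module.finrank K (LinearMap.range (T.map x y' hx h1')) := by subst h; rfl

end Aux

/-- If `(V_x)` is bigger than `(V'_x)` then `(V'_x)` is isomorphic as a filtered directed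
system to a filtered directed system `(W_x)` with `dim W_x ≤ dim V_x` for all `x ∈ [1,∞)`. -/
theorem isomorphic_to_smaller_of_bigger (K : Type) [Field K] (S T : FDS K)
    (hbig : FDS.Bigger K S T) :
    ∃ W : FDS K, FDS.Isomorphic K T W ∧
      ∀ (x : ℝ) (hx : 1 ≤ x),
        Module.finrank K (W.V x hx) ≤ Module.finrank K (S.V x hx) := by
  obtain ⟨A, B, C₀, hA, hB, hC, hBC, hrank⟩ := hbig
  refine ⟨Wfds T A B hA hB, ?_, ?_⟩
  · -- isomorphism
    refine ⟨{ C := B, one_le := hB,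
              a := fun x hx => LinearMap.codRestrict _
                (T.map x (A * (B * x)) hx
                  ((le_mul_left_real hB hx).trans
                    (le_mul_left_real hA (one_le_mul_real hB hx))))
                (fun t => mem_Psub_of_map T A B hA hB hx t),
              comm := ?_ },
           { C := A, one_le := hA,
             a := fun x hx => (Psub T A B hA hB x hx).subtype,
             comm := ?_ }, ?_, ?_⟩
    · intro x y hx hxy
      ext t
      apply Subtype.ext
      simp only [LinearMap.comp_apply, LinearMap.codRestrict_apply, Wfds,
        LinearMap.restrict_apply]
      calc T.map y (A * (B * y)) _ _ (T.map x y hx hxy t)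
          = T.map x (A * (B * y)) hx _ t := LinearMap.congr_fun (T.map_comp _ _ _ _ _ _) t
        _ = T.map (A * (B * x)) (A * (B * y)) _ _ (T.map x (A * (B * x)) hx _ t) :=
            (LinearMap.congr_fun (T.map_comp _ _ _ _ _ _) t).symm
    · intro x y hx hxy
      ext v
      simp only [LinearMap.comp_apply, Submodule.coe_subtype, Wfds, LinearMap.restrict_apply]
      rfl
    · intro x hx
      ext t
      rfl
    · intro x hx
      ext v
      apply Subtype.ext
      simp only [LinearMap.comp_apply, LinearMap.codRestrict_apply, Submodule.coe_subtype,
        Wfds, LinearMap.restrict_apply]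
      rfl
  · intro x hx
    by_cases h : B ≤ x
    · have h1 : (1:ℝ) ≤ x / B := aux_one_le_div B hB h
      have key := hrank (x / B) B h1 hB
      have e1 : A * B * (x / B) = A * x := by
        field_simp
      have e2 : B * (x / B) = x := by
        field_simp
      have hdim : Module.finrank K ((Wfds T A B hA hB).V x hx) =
          Module.finrank K (LinearMap.range (T.map (x / B) (A * x)
            (aux_one_le_div B hB h) (aux_div_le A B hA hB hx))) :=
        congrArg (fun p : Submodule K (T.V (A * x) (one_le_mul_real hA hx)) =>
          Module.finrank K p) (Psub_eq_pos T A B hA hB hx h)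
      rw [hdim, finrank_range_congr T h1 (aux_div_le A B hA hB hx) _ e1.symm]
      refine key.trans ?_
      refine (LinearMap.finrank_range_le _).trans ?_
      exact le_of_eq (finrank_V_congr S e2 _ _)
    · have hdim : Module.finrank K ((Wfds T A B hA hB).V x hx) = 0 := by
        have hh := congrArg (fun p : Submodule K (T.V (A * x) (one_le_mul_real hA hx)) =>
          Module.finrank K p) (Psub_eq_neg T A B hA hB hx h)
        exact hh.trans (finrank_bot K _)
      rw [hdim]
      exact Nat.zero_le _
end

section
/- For every integer n ≥ 1 and every real C ≥ 1, the map Φ(x,y) := (−‖x‖·y, x/‖x‖) restricts to a bijection from {(x,y) ∈ V : ‖x‖² + ‖y‖² ≤ C} onto {(u,v) ∈ T : ‖u‖² ≤ (C+1)(C−1)/4}. In particular, if (x,y) ∈ V satisfies ‖x‖² + ‖y‖² = C, then the first component u = −‖x‖·y of Φ(x,y) satisfies ‖u‖² = (C+1)(C−1)/4. -/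
set_option maxHeartbeats 1000000

/-- For `n ≥ 1` and `C ≥ 1`, the map `Φ(x,y) = (-‖x‖·y, x/‖x‖)` restricts to a bijection
from `{(x,y) ∈ V : ‖x‖² + ‖y‖² ≤ C}` onto `{(u,v) ∈ T : ‖u‖² ≤ (C+1)(C-1)/4}`, where
`V = {(x,y) : ‖x‖² - ‖y‖² = 1, ⟨x,y⟩ = 0}` and `T = {(u,v) : ‖v‖ = 1, ⟨u,v⟩ = 0}`.
In particular, if `(x,y) ∈ V` satisfies `‖x‖² + ‖y‖² = C`, then the first component
`u = -‖x‖·y` of `Φ(x,y)` satisfies `‖u‖² = (C+1)(C-1)/4`. -/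
theorem quadric_bijOn_cotangent_sphere_ball (n : ℕ) (hn : 1 ≤ n) (C : ℝ) (hC : 1 ≤ C) :
    Set.BijOn
      (fun p : EuclideanSpace ℝ (Fin n) × EuclideanSpace ℝ (Fin n) =>
        ((-‖p.1‖) • p.2, ‖p.1‖⁻¹ • p.1))
      {p : EuclideanSpace ℝ (Fin n) × EuclideanSpace ℝ (Fin n) |
        (‖p.1‖ ^ 2 - ‖p.2‖ ^ 2 = 1 ∧ (inner ℝ p.1 p.2 : ℝ) = 0) ∧
          ‖p.1‖ ^ 2 + ‖p.2‖ ^ 2 ≤ C}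
      {p : EuclideanSpace ℝ (Fin n) × EuclideanSpace ℝ (Fin n) |
        (‖p.2‖ = 1 ∧ (inner ℝ p.1 p.2 : ℝ) = 0) ∧
          ‖p.1‖ ^ 2 ≤ (C + 1) * (C - 1) / 4} ∧
    ∀ p : EuclideanSpace ℝ (Fin n) × EuclideanSpace ℝ (Fin n),
      (‖p.1‖ ^ 2 - ‖p.2‖ ^ 2 = 1 ∧ (inner ℝ p.1 p.2 : ℝ) = 0) →
      ‖p.1‖ ^ 2 + ‖p.2‖ ^ 2 = C →
      ‖(-‖p.1‖) • p.2‖ ^ 2 = (C + 1) * (C - 1) / 4 := by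
  constructor
  · refine ⟨?_, ?_, ?_⟩
    · -- MapsTo
      rintro ⟨x, y⟩ ⟨⟨hV, hI⟩, hB⟩
      simp only at hV hI hB
      have hx1 : (1 : ℝ) ≤ ‖x‖ ^ 2 := by nlinarith [sq_nonneg ‖y‖]
      have hxpos : (0 : ℝ) < ‖x‖ := by nlinarith [norm_nonneg x]
      refine ⟨⟨?_, ?_⟩, ?_⟩
      · simp only [norm_smul, norm_inv, norm_norm]
        field_simp
      · simp only [inner_smul_left, inner_smul_right, real_inner_comm x y, hI]
        push_cast
        ring
      · simp only [norm_smul, norm_neg, norm_norm, Real.norm_eq_abs, abs_of_nonneg (norm_nonneg x)]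
        have hsum1 : (1 : ℝ) ≤ ‖x‖ ^ 2 + ‖y‖ ^ 2 := by nlinarith [sq_nonneg ‖y‖]
        nlinarith [sq_nonneg ‖x‖, sq_nonneg ‖y‖]
    · -- InjOn
      rintro ⟨x, y⟩ ⟨⟨hV, hI⟩, hB⟩ ⟨x', y'⟩ ⟨⟨hV', hI'⟩, hB'⟩ heq
      simp only at hV hI hB hV' hI' hB'
      have hx1 : (1 : ℝ) ≤ ‖x‖ ^ 2 := by nlinarith [sq_nonneg ‖y‖]
      have hx1' : (1 : ℝ) ≤ ‖x'‖ ^ 2 := by nlinarith [sq_nonneg ‖y'‖]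
      have hxpos : (0 : ℝ) < ‖x‖ := by nlinarith [norm_nonneg x]
      have hxpos' : (0 : ℝ) < ‖x'‖ := by nlinarith [norm_nonneg x']
      simp only [Prod.mk.injEq] at heq
      obtain ⟨h1, h2⟩ := heq
      have hn1 : ‖x‖ * ‖y‖ = ‖x'‖ * ‖y'‖ := by
        have := congrArg norm h1
        simpa [norm_smul, abs_of_nonneg (norm_nonneg x), abs_of_nonneg (norm_nonneg x')]
          using this
      have hst : (‖x‖ * ‖y‖) ^ 2 = (‖x'‖ * ‖y'‖) ^ 2 := by rw [hn1]
      have hs2 : ‖x‖ ^ 2 = ‖x'‖ ^ 2 := by nlinarith [hst, hx1, hx1']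
      have hs : ‖x‖ = ‖x'‖ := by nlinarith [hs2, hxpos, hxpos']
      have hxx : x = x' := by
        have h3 : ‖x‖ • (‖x‖⁻¹ • x) = ‖x'‖ • (‖x'‖⁻¹ • x') := by rw [h2, hs]
        rwa [smul_smul, smul_smul, mul_inv_cancel₀ hxpos.ne', mul_inv_cancel₀ hxpos'.ne',
          one_smul, one_smul] at h3
      have hyy : y = y' := by
        rw [hs] at h1
        have h1' : ‖x'‖ • y = ‖x'‖ • y' := by
          have := congrArg (fun z => (-1 : ℝ) • z) h1
          simpa [smul_smul] using this
        exact smul_right_injective _ hxpos'.ne' h1'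
      exact Prod.ext hxx hyy
    · -- SurjOn
      rintro ⟨u, v⟩ ⟨⟨hv, hI⟩, hB⟩
      simp only at hv hI hB
      have ha0 : (0 : ℝ) ≤ ‖u‖ ^ 2 := sq_nonneg _
      set a : ℝ := ‖u‖ ^ 2 with ha
      set D : ℝ := Real.sqrt (1 + 4 * a) with hD
      have hD2 : D ^ 2 = 1 + 4 * a := Real.sq_sqrt (by linarith)
      have hD1 : 1 ≤ D := by
        rw [show (1:ℝ) = Real.sqrt 1 by simp]
        exact Real.sqrt_le_sqrt (by linarith)
      set r : ℝ := Real.sqrt ((1 + D) / 2) with hr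
      have hr2 : r ^ 2 = (1 + D) / 2 := Real.sq_sqrt (by linarith)
      have hr1 : 1 ≤ r := by
        rw [show (1:ℝ) = Real.sqrt 1 by simp]
        exact Real.sqrt_le_sqrt (by linarith)
      have hrpos : (0 : ℝ) < r := by linarith
      have hkey : r ^ 2 * (r ^ 2 - 1) = a := by rw [hr2]; nlinarith
      have hinv : (r⁻¹) ^ 2 * a = r ^ 2 - 1 := by
        field_simp
        nlinarith
      refine ⟨(r • v, (-r⁻¹) • u), ⟨⟨?_, ?_⟩, ?_⟩, ?_⟩
      · -- on V
        show ‖r • v‖ ^ 2 - ‖(-r⁻¹) • u‖ ^ 2 = 1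
        rw [norm_smul, norm_smul]
        simp only [Real.norm_eq_abs, abs_of_nonneg hrpos.le, abs_neg,
          abs_of_nonneg (inv_nonneg.mpr hrpos.le), hv, mul_one]
        rw [mul_pow, ← ha, hinv]
        ring
      · show (inner ℝ (r • v) ((-r⁻¹) • u) : ℝ) = 0
        rw [real_inner_smul_left, real_inner_smul_right, real_inner_comm, hI]
        ring
      · -- bound
        show ‖r • v‖ ^ 2 + ‖(-r⁻¹) • u‖ ^ 2 ≤ C
        rw [norm_smul, norm_smul]
        simp only [Real.norm_eq_abs, abs_of_nonneg hrpos.le, abs_neg,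
          abs_of_nonneg (inv_nonneg.mpr hrpos.le), hv, mul_one]
        rw [mul_pow, ← ha, hinv, hr2]
        have hDC : D ≤ C := by
          rw [hD, show C = Real.sqrt (C ^ 2) by rw [Real.sqrt_sq (by linarith)]]
          exact Real.sqrt_le_sqrt (by nlinarith)
        linarith
      · -- image
        have hnorm : ‖r • v‖ = r := by
          rw [norm_smul, Real.norm_eq_abs, abs_of_nonneg hrpos.le, hv, mul_one]
        show ((-‖r • v‖) • ((-r⁻¹) • u), ‖r • v‖⁻¹ • (r • v)) = (u, v)
        rw [hnorm, Prod.mk.injEq]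
        constructor
        · rw [smul_smul, show (-r) * -r⁻¹ = 1 by field_simp, one_smul]
        · rw [smul_smul, inv_mul_cancel₀ hrpos.ne', one_smul]
  · -- the "in particular" statement
    rintro ⟨x, y⟩ ⟨hV, hI⟩ hB
    simp only at hV hI hB
    rw [norm_smul, Real.norm_eq_abs, abs_neg, abs_of_nonneg (norm_nonneg x)]
    nlinarith [norm_nonneg x, norm_nonneg y, sq_nonneg ‖y‖]
end
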